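/- The partial derivative of the standard bivariate normal CDF with respect to the correlation parameter equals the bivariate normal density: ∂Φ₂(μ,ν;ρ)/∂ρ = φ₂(μ,ν;ρ) = (1/(2π√(1-ρ²)))·exp(-(μ² - 2ρμν + ν²)/(2(1-ρ²))), for any ρ ∈ (-1,1). -/

import Mathlib

open MeasureTheory Real Set Filter
open scoped Topology

/-!
Differentiate under the integral sign. With `u = (ν - ρv)/√(1-ρ²)` one has
`φ(u) φ(v) = √(1-ρ²) φ₂(v,ν;ρ)`, so by the chain rule the `ρ`-derivative of the integrand
`Φ(u) φ(v)` is `φ₂(v,ν;ρ) (ρν - v)/(1-ρ²)`, which is also the `v`-derivative of `φ₂(v,ν;ρ)`.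
Integrating over `v < μ` gives `φ₂(μ,ν;ρ)`, as `φ₂(v,ν;ρ) → 0` when `v → -∞`. Uniformly for
correlations near `ρ`, the `ρ`-derivative is dominated by a multiple of `(|ν| + |v|) φ(v)`.
-/

noncomputable def stdPdf (x : ℝ) : ℝ := (Real.sqrt (2 * Real.pi))⁻¹ * Real.exp (-(x ^ 2) / 2)

noncomputable def stdCdf (x : ℝ) : ℝ := ∫ v in Set.Iio x, stdPdf v

noncomputable def Phi2 (μ ν ρ : ℝ) : ℝ :=
  ∫ v in Set.Iio μ, stdCdf ((ν - ρ * v) / Real.sqrt (1 - ρ ^ 2)) * stdPdf v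

noncomputable def phi2 (μ ν ρ : ℝ) : ℝ :=
  (2 * Real.pi * Real.sqrt (1 - ρ ^ 2))⁻¹ *
    Real.exp (-(μ ^ 2 - 2 * ρ * μ * ν + ν ^ 2) / (2 * (1 - ρ ^ 2)))

theorem hasDerivAt_integral_Iio {E : Type*} [NormedAddCommGroup E] [NormedSpace ℝ E]
    [CompleteSpace E] {f : ℝ → E} (hf : Integrable f) {x : ℝ} (hfx : ContinuousAt f x) :
    HasDerivAt (fun y => ∫ t in Iio y, f t) (f x) x := by
  have hsplit : (fun y => ∫ t in Iio y, f t) =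
      fun y => (∫ t in Iio 0, f t) + ∫ t in (0 : ℝ)..y, f t := by
    funext y
    rw [← intervalIntegral.integral_Iic_sub_Iic hf.integrableOn hf.integrableOn,
      integral_Iic_eq_integral_Iio, integral_Iic_eq_integral_Iio, add_sub_cancel]
  rw [hsplit]
  exact (intervalIntegral.integral_hasDerivAt_right hf.intervalIntegrable
    (hf.aestronglyMeasurable.stronglyMeasurableAtFilter) hfx).const_add _

lemma stdPdf_eq_gaussianPDFReal : stdPdf = ProbabilityTheory.gaussianPDFReal 0 1 := by
  ext x
  simp [stdPdf, ProbabilityTheory.gaussianPDFReal]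

lemma stdPdf_nonneg (x : ℝ) : 0 ≤ stdPdf x := by
  unfold stdPdf; positivity

lemma stdPdf_le (x : ℝ) : stdPdf x ≤ (√(2 * π))⁻¹ :=
  mul_le_of_le_one_right (by positivity) (exp_le_one_iff.2 (by nlinarith [sq_nonneg x]))

lemma continuous_stdPdf : Continuous stdPdf := by
  unfold stdPdf; fun_prop

lemma integrable_stdPdf : Integrable stdPdf :=
  stdPdf_eq_gaussianPDFReal ▸ ProbabilityTheory.integrable_gaussianPDFReal 0 1

lemma integrable_abs_mul_stdPdf : Integrable fun v => |v| * stdPdf v := by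
  refine ((integrable_mul_exp_neg_mul_sq (b := 2⁻¹) (by norm_num)).abs.const_mul
    (√(2 * π))⁻¹).congr (ae_of_all _ fun x => ?_)
  simp only [stdPdf, abs_mul, abs_of_pos (exp_pos _)]
  ring_nf

lemma stdCdf_nonneg (x : ℝ) : 0 ≤ stdCdf x :=
  integral_nonneg stdPdf_nonneg

lemma stdCdf_le_one (x : ℝ) : stdCdf x ≤ 1 := by
  calc stdCdf x ≤ ∫ v, stdPdf v :=
        setIntegral_le_integral integrable_stdPdf (ae_of_all _ stdPdf_nonneg)
    _ = 1 := by
        rw [stdPdf_eq_gaussianPDFReal, ProbabilityTheory.integral_gaussianPDFReal_eq_one 0 one_ne_zero]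

lemma hasDerivAt_stdCdf (x : ℝ) : HasDerivAt stdCdf (stdPdf x) x :=
  hasDerivAt_integral_Iio integrable_stdPdf continuous_stdPdf.continuousAt

lemma continuous_stdCdf : Continuous stdCdf :=
  continuous_iff_continuousAt.2 fun x => (hasDerivAt_stdCdf x).continuousAt

lemma integrable_stdCdf_comp_mul_stdPdf {g : ℝ → ℝ} (hg : Measurable g) :
    Integrable fun v => stdCdf (g v) * stdPdf v :=
  integrable_stdPdf.bdd_mul (c := 1) (continuous_stdCdf.measurable.comp hg).aestronglyMeasurable
    (ae_of_all _ fun v => by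
      rw [norm_of_nonneg (stdCdf_nonneg _)]; exact stdCdf_le_one _)

section Bivariate

variable {ν r : ℝ}

lemma stdPdf_mul_stdPdf (hr : 0 < 1 - r ^ 2) (v : ℝ) :
    stdPdf ((ν - r * v) / √(1 - r ^ 2)) * stdPdf v = √(1 - r ^ 2) * phi2 v ν r := by
  calc stdPdf ((ν - r * v) / √(1 - r ^ 2)) * stdPdf v
      = (2 * π)⁻¹ * exp (-(v ^ 2 - 2 * r * v * ν + ν ^ 2) / (2 * (1 - r ^ 2))) := by
        rw [stdPdf, stdPdf, mul_mul_mul_comm, ← exp_add, ← mul_inv, mul_self_sqrt (by positivity),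
          div_pow, sq_sqrt hr.le]
        congr 2
        field_simp
        ring
    _ = √(1 - r ^ 2) * phi2 v ν r := by
        rw [phi2]
        field_simp

lemma hasDerivAt_phi2_left (hr : 0 < 1 - r ^ 2) (v : ℝ) :
    HasDerivAt (fun w => phi2 w ν r) (phi2 v ν r * ((r * ν - v) / (1 - r ^ 2))) v := by
  have hexponent : HasDerivAt (fun w => -(w ^ 2 - 2 * r * w * ν + ν ^ 2) / (2 * (1 - r ^ 2)))
      ((r * ν - v) / (1 - r ^ 2)) v := by
    refine ((((hasDerivAt_pow 2 v).sub ((hasDerivAt_id v).const_mul (2 * r * ν))).add_const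
      (ν ^ 2)).neg.div_const (2 * (1 - r ^ 2)) |>.congr_deriv ?_).congr_of_eventuallyEq
      (Eventually.of_forall fun w => ?_)
    · field_simp
      ring
    · simp only [Pi.neg_apply, Pi.sub_apply, id_eq]
      ring
  exact (hexponent.exp.const_mul _).congr_deriv (mul_assoc _ _ _).symm

lemma tendsto_phi2_atBot (hr : 0 < 1 - r ^ 2) : Tendsto (fun w => phi2 w ν r) atBot (𝓝 0) := by
  have hexponent : Tendsto (fun w => -(w ^ 2 - 2 * r * w * ν + ν ^ 2) / (2 * (1 - r ^ 2)))
      atBot atBot := by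
    have hsq : Tendsto (fun w => (w - r * ν) ^ 2) atBot atTop :=
      (tendsto_pow_atTop two_ne_zero).comp
        (tendsto_abs_atBot_atTop.comp (tendsto_atBot_add_const_right _ (-(r * ν)) tendsto_id))
        |>.congr fun w => by simp [sq_abs, sub_eq_add_neg]
    refine (tendsto_neg_atTop_atBot.comp ((tendsto_atTop_add_const_right _ (ν ^ 2 * (1 - r ^ 2))
      hsq).atTop_div_const (by positivity : 0 < 2 * (1 - r ^ 2)))).congr fun w => ?_
    simp only [Function.comp]
    field_simp
    ring
  have h := (tendsto_exp_atBot.comp hexponent).const_mul (2 * π * √(1 - r ^ 2))⁻¹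
  rw [mul_zero] at h
  exact h

lemma hasDerivAt_stdCdf_mul_stdPdf (hr : 0 < 1 - r ^ 2) (v : ℝ) :
    HasDerivAt (fun t => stdCdf ((ν - t * v) / √(1 - t ^ 2)) * stdPdf v)
      (phi2 v ν r * ((r * ν - v) / (1 - r ^ 2))) r := by
  have hs : 0 < √(1 - r ^ 2) := sqrt_pos.2 hr
  have harg : HasDerivAt (fun t => (ν - t * v) / √(1 - t ^ 2))
      ((r * ν - v) / ((1 - r ^ 2) * √(1 - r ^ 2))) r := by
    refine ((hasDerivAt_mul_const v).const_sub ν |>.div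
      (((hasDerivAt_pow 2 r).const_sub 1).sqrt hr.ne') hs.ne').congr_deriv ?_
    field_simp
    linear_combination (2 * r ^ 2 * v - 2 * r * ν) * sq_sqrt hr.le
  refine ((hasDerivAt_stdCdf _).comp r harg |>.mul_const (stdPdf v)).congr_deriv ?_
  calc stdPdf ((ν - r * v) / √(1 - r ^ 2)) * ((r * ν - v) / ((1 - r ^ 2) * √(1 - r ^ 2)))
        * stdPdf v
      = stdPdf ((ν - r * v) / √(1 - r ^ 2)) * stdPdf v
        * ((r * ν - v) / ((1 - r ^ 2) * √(1 - r ^ 2))) := by ring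
    _ = phi2 v ν r * ((r * ν - v) / (1 - r ^ 2)) := by
        rw [stdPdf_mul_stdPdf hr]
        field_simp

lemma abs_phi2_mul_le {c : ℝ} (hc : 0 < c) (hcr : c ≤ 1 - r ^ 2) (v : ℝ) :
    |phi2 v ν r * ((r * ν - v) / (1 - r ^ 2))| ≤
      (√(2 * π))⁻¹ / (c * √c) * ((|ν| + |v|) * stdPdf v) := by
  have hr : 0 < 1 - r ^ 2 := hc.trans_le hcr
  have hs : 0 < √(1 - r ^ 2) := sqrt_pos.2 hr
  have hphi_nonneg : 0 ≤ phi2 v ν r := by unfold phi2; positivity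
  have hphi : phi2 v ν r ≤ (√(2 * π))⁻¹ * stdPdf v / √(1 - r ^ 2) := by
    rw [le_div_iff₀ hs, mul_comm, ← stdPdf_mul_stdPdf hr]
    exact mul_le_mul_of_nonneg_right (stdPdf_le _) (stdPdf_nonneg v)
  have hnum : |r * ν - v| ≤ |ν| + |v| := by
    have hr1 : |r| ≤ 1 := sq_le_one_iff_abs_le_one r |>.1 (by linarith)
    calc |r * ν - v| ≤ |r| * |ν| + |v| := (abs_sub _ _).trans_eq (by rw [abs_mul])
      _ ≤ |ν| + |v| := by nlinarith [abs_nonneg ν]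
  rw [abs_mul, abs_of_nonneg hphi_nonneg, abs_div, abs_of_pos hr]
  calc phi2 v ν r * (|r * ν - v| / (1 - r ^ 2))
      ≤ (√(2 * π))⁻¹ * stdPdf v / √(1 - r ^ 2) * ((|ν| + |v|) / (1 - r ^ 2)) :=
        mul_le_mul hphi (by gcongr) (by positivity)
          (div_nonneg (mul_nonneg (by positivity) (stdPdf_nonneg v)) hs.le)
    _ = (√(2 * π))⁻¹ / ((1 - r ^ 2) * √(1 - r ^ 2)) * ((|ν| + |v|) * stdPdf v) := by
        field_simp
    _ ≤ (√(2 * π))⁻¹ / (c * √c) * ((|ν| + |v|) * stdPdf v) := by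
        gcongr
        exact mul_nonneg (by positivity) (stdPdf_nonneg v)

lemma integrable_add_abs_mul_stdPdf (a : ℝ) : Integrable fun v => (a + |v|) * stdPdf v :=
  ((integrable_stdPdf.const_mul a).add integrable_abs_mul_stdPdf).congr
    (ae_of_all _ fun v => by simp only [Pi.add_apply]; ring)

lemma integrable_phi2_mul (hr : 0 < 1 - r ^ 2) :
    Integrable fun v => phi2 v ν r * ((r * ν - v) / (1 - r ^ 2)) := by
  have hcont : Continuous fun w => phi2 w ν r :=
    continuous_iff_continuousAt.2 fun v => (hasDerivAt_phi2_left hr v).continuousAt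
  exact ((integrable_add_abs_mul_stdPdf |ν|).const_mul _).mono'
    (hcont.mul (by fun_prop)).aestronglyMeasurable
    (ae_of_all _ fun v => abs_phi2_mul_le hr le_rfl v)

lemma integral_Iio_phi2_mul (hr : 0 < 1 - r ^ 2) (μ : ℝ) :
    ∫ v in Iio μ, phi2 v ν r * ((r * ν - v) / (1 - r ^ 2)) = phi2 μ ν r := by
  rw [← integral_Iic_eq_integral_Iio, integral_Iic_of_hasDerivAt_of_tendsto'
    (fun v _ => hasDerivAt_phi2_left hr v) (integrable_phi2_mul hr).integrableOn
    (tendsto_phi2_atBot hr), sub_zero]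

end Bivariate

theorem stmt1 (μ ν ρ : ℝ) (hρ : ρ ∈ Set.Ioo (-1 : ℝ) 1) :
    HasDerivAt (fun r => Phi2 μ ν r) (phi2 μ ν ρ) ρ := by
  have hρ' : 0 < 1 - ρ ^ 2 := by nlinarith [hρ.1, hρ.2]
  have hc : 0 < (1 - ρ ^ 2) / 2 := half_pos hρ'
  have hnhds : {r : ℝ | (1 - ρ ^ 2) / 2 < 1 - r ^ 2} ∈ 𝓝 ρ :=
    (isOpen_lt continuous_const (by fun_prop)).mem_nhds (half_lt_self hρ')
  have hF_int : ∀ r, Integrable fun v => stdCdf ((ν - r * v) / √(1 - r ^ 2)) * stdPdf v :=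
    fun r => integrable_stdCdf_comp_mul_stdPdf (by fun_prop)
  rw [← integral_Iio_phi2_mul hρ' μ]
  exact (hasDerivAt_integral_of_dominated_loc_of_deriv_le (μ := volume.restrict (Iio μ))
    (F' := fun r v => phi2 v ν r * ((r * ν - v) / (1 - r ^ 2))) hnhds
    (Eventually.of_forall fun r => (hF_int r).aestronglyMeasurable.restrict)
    (hF_int ρ).integrableOn (integrable_phi2_mul hρ').aestronglyMeasurable.restrict
    (ae_of_all _ fun v r hr => abs_phi2_mul_le hc hr.le v)
    ((integrable_add_abs_mul_stdPdf |ν|).const_mul _).integrableOn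
    (ae_of_all _ fun v r hr => hasDerivAt_stdCdf_mul_stdPdf (hc.trans hr) v)).2
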